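/- arXiv:1609.05958 — 2 statements merged into one kernel-verified Lean document; each statement's English description precedes it below -/
import Mathlib

section
/- Let K be a finite field of cardinality q and characteristic p, let n ≥ 0, and let F ∈ K[x_0, …, x_n] be homogeneous of degree n+1. Let M be the number of projective zeros of F in ℙ(K^{n+1}), and let c ∈ K be the coefficient of the monomial (x_0 x_1 ⋯ x_n)^{q−1} in F^{q−1}. Then the image of M in K equals 1 − (−1)^n · c; equivalently, M ≡ 1 − (−1)^n · c (mod p). -/
/-! Over a field with `q` elements, `1 - G(x) ^ (q - 1)` is the indicator function of the zero set
of `G`, and summing a monomial `∏ xᵢ ^ dᵢ` over `K ^ m` gives `∏ᵢ ∑ₜ t ^ dᵢ`, which vanishes unless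
every `dᵢ` is a positive multiple of `q - 1`. If `deg G ≤ (q - 1) m` this leaves only the monomial
`(x₁ ⋯ xₘ) ^ (q - 1)`; applied to `G = F ^ (q - 1)` it counts the affine zeros of `F` modulo `p`.
For homogeneous `F` the nonzero affine zeros are `q - 1 ≡ -1` copies of the projective ones. -/

open MvPolynomial Finset

namespace FiniteField

variable {K : Type*} [Field K] [Fintype K]

local notation "q" => Fintype.card K

theorem sum_pow_eq_ite (a : ℕ) :
    ∑ t : K, t ^ a = if a ≠ 0 ∧ q - 1 ∣ a then -1 else 0 := by
  classical
  rcases eq_or_ne a 0 with rfl | ha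
  · simp
  have hcard_units : ∑ u : Kˣ, (u : K) ^ a = ∑ t : K, t ^ a := by
    refine Fintype.sum_of_injective _ Units.val_injective _ _ (fun t ht => ?_) fun _ => rfl
    obtain rfl : t = 0 := by_contra fun h => ht ⟨Units.mk0 t h, rfl⟩
    exact zero_pow ha
  rw [← hcard_units, sum_pow_units]
  simp [ha]

theorem prod_sum_pow_eq_ite {σ : Type*} [Fintype σ] [DecidableEq σ] (d : σ →₀ ℕ)
    (hd : d.degree ≤ (q - 1) * Fintype.card σ) :
    ∏ i, ∑ t : K, t ^ d i =
      if d = Finsupp.equivFunOnFinite.symm (fun _ => q - 1)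
        then (-1) ^ Fintype.card σ else 0 := by
  have hq : 0 < q - 1 := Nat.sub_pos_of_lt Fintype.one_lt_card
  split_ifs with hd₀
  · simp [hd₀, sum_pow_eq_ite (K := K), hq.ne']
  by_contra hne
  refine hd₀ (Finsupp.ext fun i => ?_)
  have hfactor (i : σ) : d i ≠ 0 ∧ q - 1 ∣ d i := by
    by_contra hi
    exact hne (prod_eq_zero (mem_univ i) (by rw [sum_pow_eq_ite, if_neg hi]))
  have hle (i : σ) : q - 1 ≤ d i :=
    Nat.le_of_dvd (Nat.pos_of_ne_zero (hfactor i).1) (hfactor i).2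
  have hsum : ∑ _i : σ, (q - 1) = ∑ i, d i := by
    refine le_antisymm (sum_le_sum fun i _ => hle i) ?_
    simpa [← Finsupp.degree_eq_sum, mul_comm] using hd
  exact ((sum_eq_sum_iff_of_le fun i _ => hle i).1 hsum i (mem_univ i)).symm

end FiniteField

namespace MvPolynomial

theorem IsHomogeneous.eval_smul {R σ : Type*} [CommSemiring R] [Fintype σ]
    {F : MvPolynomial σ R} {k : ℕ} (hF : F.IsHomogeneous k) (a : R) (v : σ → R) :
    eval (a • v) F = a ^ k * eval v F := by
  rw [eval_eq', eval_eq', mul_sum]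
  refine sum_congr rfl fun d hd => ?_
  have hdeg : ∑ i, d i = k := by
    rw [← Finsupp.degree_eq_sum, Finsupp.degree_apply, hF.degree_eq_sum_deg_support hd]
  simp only [Pi.smul_apply, smul_eq_mul, mul_pow, prod_mul_distrib, prod_pow_eq_pow_sum, hdeg]
  ring

variable {K σ : Type*} [Field K] [Fintype K] [Fintype σ] [DecidableEq σ]

local notation "q" => Fintype.card K

theorem sum_eval_eq_neg_one_pow_mul_coeff (f : MvPolynomial σ K)
    (hf : f.totalDegree ≤ (q - 1) * Fintype.card σ) :
    ∑ x, eval x f = (-1) ^ Fintype.card σ *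
      coeff (Finsupp.equivFunOnFinite.symm fun _ => q - 1) f := by
  calc ∑ x, eval x f = ∑ d ∈ f.support, coeff d f * ∏ i, ∑ t : K, t ^ d i := by
        simp only [eval_eq', Fintype.prod_sum, mul_sum]
        exact sum_comm
    _ = ∑ d ∈ f.support, coeff d f * if d = Finsupp.equivFunOnFinite.symm
          (fun _ => q - 1) then (-1) ^ Fintype.card σ else 0 :=
        sum_congr rfl fun d hd => by
          rw [FiniteField.prod_sum_pow_eq_ite d ((le_totalDegree hd).trans hf)]
    _ = _ := by
        rw [mul_comm]
        simp only [mul_ite, mul_zero, sum_ite_eq']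
        split_ifs with h
        · rfl
        · rw [notMem_support_iff.mp h, zero_mul]

theorem card_zeros_eq_neg_sum_eval_pow [Nonempty σ] (f : MvPolynomial σ K) :
    (Nat.card {x : σ → K // eval x f = 0} : K) = -∑ x, eval x (f ^ (q - 1)) := by
  classical
  have hq : 0 < q - 1 := Nat.sub_pos_of_lt Fintype.one_lt_card
  have hindicator (x : σ → K) :
      (if eval x f = 0 then 1 else 0 : K) = 1 - eval x (f ^ (q - 1)) := by
    split_ifs with h
    · simp [h, hq.ne']
    · simp [FiniteField.pow_card_sub_one_eq_one _ h]
  have hcard : (Fintype.card (σ → K) : K) = 0 := by simp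
  rw [Nat.card_eq_fintype_card, Fintype.card_subtype, card_filter, Nat.cast_sum]
  simp only [Nat.cast_ite, Nat.cast_one, Nat.cast_zero, hindicator, sum_sub_distrib, sum_const,
    card_univ, nsmul_eq_mul, mul_one, hcard, zero_sub]

end MvPolynomial

namespace Projectivization

open scoped LinearAlgebra.Projectivization

variable {k V : Type*} [DivisionRing k] [AddCommGroup V] [Module k V]

theorem card_subtype_eq_card_mul_add_one [Finite V] (Z : V → Prop) (h0 : Z 0)
    (hZ : ∀ (a : kˣ) (v : V), Z (a • v) ↔ Z v) :
    Nat.card {v // Z v} =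
      Nat.card {P : ℙ k V // ∀ v (hv : v ≠ 0), mk k v hv = P → Z v} * (Nat.card k - 1) + 1 := by
  have hnonzero : Nat.card {v : {v : V // v ≠ 0} // Z v} =
      Nat.card {P : ℙ k V // ∀ v (hv : v ≠ 0), mk k v hv = P → Z v} * (Nat.card k - 1) := by
    rw [← Nat.card_units k, ← Nat.card_prod]
    refine Nat.card_congr (((nonZeroEquivProjectivizationProdUnits k V).subtypeEquiv
      fun v => ⟨fun hv w hw hwv => ?_, fun h => h v v.2 rfl⟩).trans
      Equiv.prodSubtypeFstEquivSubtypeProd)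
    obtain ⟨a, rfl⟩ := (mk_eq_mk_iff k w v hw v.2).1 hwv
    exact (hZ a v).2 hv
  rw [← hnonzero, Nat.card_congr (Equiv.subtypeSubtypeEquivSubtypeInter _ _)]
  change {v | Z v}.ncard = {v | v ≠ 0 ∧ Z v}.ncard + 1
  rw [← Set.ncard_sdiff_singleton_add_one (show (0 : V) ∈ {v | Z v} from h0)]
  congr 2
  ext v
  simp [and_comm]

end Projectivization

theorem projective_point_count_eq_coeff_general
    {K : Type*} [Field K] [Fintype K]
    (n : ℕ) (F : MvPolynomial (Fin (n + 1)) K) (hF : F.IsHomogeneous (n + 1)) :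
    ((Nat.card {P : Projectivization K (Fin (n + 1) → K) //
        ∀ (v : Fin (n + 1) → K) (hv : v ≠ 0),
          Projectivization.mk K v hv = P → eval v F = 0} : K)) =
      1 - (-1 : K) ^ n *
        coeff (Finsupp.equivFunOnFinite.symm fun _ : Fin (n + 1) => Fintype.card K - 1)
          (F ^ (Fintype.card K - 1)) := by
  have hcone := Projectivization.card_subtype_eq_card_mul_add_one (k := K)
    (fun v => eval v F = 0) (by simpa using hF.eval_smul 0 0) fun a v => by
      rw [Units.smul_def, hF.eval_smul, mul_eq_zero_iff_left (pow_ne_zero _ a.ne_zero)]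
  have hdeg : (F ^ (Fintype.card K - 1)).totalDegree ≤
      (Fintype.card K - 1) * Fintype.card (Fin (n + 1)) := by
    simpa [mul_comm] using (hF.pow (Fintype.card K - 1)).totalDegree_le
  have hzeros := card_zeros_eq_neg_sum_eval_pow F
  rw [sum_eval_eq_neg_one_pow_mul_coeff _ hdeg, hcone] at hzeros
  have hcard_units : ((Nat.card K - 1 : ℕ) : K) = -1 := by
    rw [Nat.cast_sub Nat.card_pos, Nat.card_eq_fintype_card, FiniteField.cast_card_eq_zero,
      Nat.cast_one, zero_sub]
  push_cast [hcard_units, Fintype.card_fin, pow_succ] at hzeros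
  linear_combination -hzeros

/-- For a homogeneous polynomial `F` of degree `n+1` over a finite field `K` of
cardinality `q` and characteristic `p`, the number `M` of projective zeros of `F`
satisfies `(M : K) = 1 - (-1)^n * c`, where `c` is the coefficient of
`(x_0 ⋯ x_n)^(q-1)` in `F^(q-1)`. -/
theorem projective_point_count_eq_coeff
    {K : Type*} [Field K] [Fintype K] (p : ℕ) [CharP K p]
    (n : ℕ) (F : MvPolynomial (Fin (n + 1)) K) (hF : F.IsHomogeneous (n + 1)) :
    ((Nat.card {P : Projectivization K (Fin (n + 1) → K) //
        ∀ (v : Fin (n + 1) → K) (hv : v ≠ 0),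
          Projectivization.mk K v hv = P → eval v F = 0} : K)) =
      1 - (-1 : K) ^ n *
        coeff (Finsupp.equivFunOnFinite.symm fun _ : Fin (n + 1) => Fintype.card K - 1)
          (F ^ (Fintype.card K - 1)) :=
  projective_point_count_eq_coeff_general n F hF
end

section
/- Let p be a prime and n ≥ 0 a natural number such that n+1 divides p−1. Then the number of vectors x = (x_0, …, x_n) ∈ 𝔽_p^{n+1} satisfying x_0^{n+1} + x_1^{n+1} + ⋯ + x_n^{n+1} = 0 is not divisible by p. -/
/-!
Modulo `p`, the number of zeros of `f = ∑ xᵢ^(n+1)` on `𝔽_p^(n+1)` is `-∑ₓ f(x)^(p-1)`,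
since `f(x)^(p-1)` is the indicator of `f(x) ≠ 0`. Expanding `f^(p-1)` by the multinomial
theorem and summing each variable separately, `∑_y y^e` vanishes unless `e` is a positive
multiple of `p - 1`. Writing `p - 1 = (n+1) d`, only the exponent vector `(d, …, d)` survives,
so the count is `±(p-1)! / (d!)^(n+1)`, which is prime to `p`.
-/

open Finset

lemma Nat.Prime.not_dvd_multinomial {α : Type*} {p : ℕ} (hp : p.Prime) {s : Finset α} {f : α → ℕ}
    (h : ∑ i ∈ s, f i < p) : ¬ p ∣ Nat.multinomial s f := fun hdvd ↦ by
  have : p ∣ (∑ i ∈ s, f i).factorial := Nat.multinomial_spec s f ▸ dvd_mul_of_dvd_right hdvd _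
  exact h.not_ge ((hp.dvd_factorial).1 this)

lemma Finset.eq_const_of_mem_piAntidiag_of_le {ι : Type*} [Fintype ι] [DecidableEq ι]
    {d : ℕ} {k : ι → ℕ} (hk : k ∈ piAntidiag univ (Fintype.card ι * d)) (hle : ∀ i, d ≤ k i) :
    k = fun _ ↦ d := by
  have hsum : ∑ _i : ι, d = ∑ i, k i := by
    rw [(mem_piAntidiag.1 hk).1, sum_const, card_univ, smul_eq_mul]
  funext i
  exact ((sum_eq_sum_iff_of_le fun i _ ↦ hle i).1 hsum i (mem_univ i)).symm

lemma Fintype.sum_sum_pow_pow_eq_sum_piAntidiag {ι R : Type*} [Fintype ι] [DecidableEq ι]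
    [CommSemiring R] [Fintype R] (m N : ℕ) :
    ∑ x : ι → R, (∑ i, x i ^ m) ^ N =
      ∑ k ∈ piAntidiag (univ : Finset ι) N,
        Nat.multinomial univ k * ∏ i, ∑ y : R, y ^ (m * k i) := by
  simp_rw [sum_pow_eq_sum_piAntidiag, ← pow_mul]
  rw [sum_comm]
  refine Finset.sum_congr rfl fun k _ ↦ ?_
  rw [← mul_sum, Fintype.prod_sum]

namespace FiniteField

variable {K : Type*} [Field K] [Fintype K]

local notation "q" => Fintype.card K

theorem sum_pow_of_ne_zero {e : ℕ} (he : e ≠ 0) :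
    ∑ x : K, x ^ e = if q - 1 ∣ e then -1 else 0 := by
  classical
  rw [← sum_pow_units K e, ← Fintype.sum_subtype_add_sum_subtype (· ≠ 0) (· ^ e),
    Fintype.sum_eq_zero (fun x : {x : K // ¬x ≠ 0} ↦ x.1 ^ e) fun x ↦ by
      rw [not_not.1 x.2, zero_pow he], add_zero]
  exact (Fintype.sum_equiv unitsEquivNeZero _ _ fun _ ↦ rfl).symm

theorem ne_zero_and_dvd_of_sum_pow_ne_zero {e : ℕ} (h : ∑ x : K, x ^ e ≠ 0) :
    e ≠ 0 ∧ q - 1 ∣ e := by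
  obtain rfl | he := eq_or_ne e 0
  · simp at h
  · refine ⟨he, ?_⟩
    by_contra hdvd
    rw [sum_pow_of_ne_zero he, if_neg hdvd] at h
    exact h rfl

theorem natCast_card_zeroes {α : Type*} [Fintype α] (f : α → K) :
    (Nat.card {x // f x = 0} : K) = Fintype.card α - ∑ x, f x ^ (q - 1) := by
  classical
  calc (Nat.card {x // f x = 0} : K) = ∑ x, if f x = 0 then 1 else 0 := by
        rw [sum_boole, Nat.card_eq_fintype_card, Fintype.card_subtype]
    _ = ∑ x, (1 - f x ^ (q - 1)) := Finset.sum_congr rfl fun x _ ↦ by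
        split_ifs with h
        · rw [h, zero_pow (by have := Fintype.one_lt_card (α := K); omega), sub_zero]
        · rw [pow_card_sub_one_eq_one _ h, sub_self]
    _ = Fintype.card α - ∑ x, f x ^ (q - 1) := by
        rw [sum_sub_distrib, sum_const, card_univ, nsmul_one]

variable {ι : Type*} [Fintype ι] [DecidableEq ι] {d : ℕ}

theorem prod_sum_pow_eq_zero_of_ne_const (hd : Fintype.card ι * d = q - 1) {k : ι → ℕ}
    (hk : k ∈ piAntidiag univ (q - 1)) (hne : k ≠ fun _ ↦ d) :
    ∏ i, ∑ y : K, y ^ (Fintype.card ι * k i) = 0 := by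
  by_contra h
  have hle (i : ι) : d ≤ k i := by
    obtain ⟨hki, hdvd⟩ := ne_zero_and_dvd_of_sum_pow_ne_zero (prod_ne_zero_iff.1 h i (mem_univ i))
    rw [← hd] at hdvd
    exact Nat.le_of_mul_le_mul_left (Nat.le_of_dvd (Nat.pos_of_ne_zero hki) hdvd)
      (Fintype.card_pos_iff.2 ⟨i⟩)
  exact hne (eq_const_of_mem_piAntidiag_of_le (hd ▸ hk) hle)

theorem sum_sum_pow_card_pow_card_sub_one (hd : Fintype.card ι * d = q - 1) :
    ∑ x : ι → K, (∑ i, x i ^ Fintype.card ι) ^ (q - 1) =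
      Nat.multinomial (univ : Finset ι) (fun _ ↦ d) * (-1) ^ Fintype.card ι := by
  have hconst : (fun _ ↦ d) ∈ piAntidiag (univ : Finset ι) (q - 1) := by
    simp [mem_piAntidiag, ← hd]
  rw [Fintype.sum_sum_pow_pow_eq_sum_piAntidiag, sum_eq_single_of_mem _ hconst
    fun k hk hne ↦ by rw [prod_sum_pow_eq_zero_of_ne_const hd hk hne, mul_zero]]
  have hq : q - 1 ≠ 0 := by have := Fintype.one_lt_card (α := K); omega
  simp_rw [hd, sum_pow_of_ne_zero hq, if_pos dvd_rfl, prod_const, card_univ]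

theorem natCast_card_zeroes_sum_pow_card (hd : Fintype.card ι * d = q - 1) :
    (Nat.card {x : ι → K // ∑ i, x i ^ Fintype.card ι = 0} : K) =
      -(Nat.multinomial (univ : Finset ι) (fun _ ↦ d) * (-1) ^ Fintype.card ι) := by
  have hι : Fintype.card ι ≠ 0 := by
    rintro h
    have := Fintype.one_lt_card (α := K)
    rw [h, zero_mul] at hd
    omega
  rw [natCast_card_zeroes, sum_sum_pow_card_pow_card_sub_one hd, Fintype.card_fun,
    Nat.cast_pow, cast_card_eq_zero, zero_pow hι, zero_sub]

end FiniteField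

/-- For a prime `p` with `n + 1 ∣ p - 1`, the number of solutions of
`x_0^(n+1) + ⋯ + x_n^(n+1) = 0` in `𝔽_p^(n+1)` is not divisible by `p`. -/
theorem fermat_affine_point_count_not_dvd (p n : ℕ) (hp : p.Prime)
    (hdvd : (n + 1) ∣ p - 1) :
    ¬ p ∣ Nat.card {x : Fin (n + 1) → ZMod p // ∑ i : Fin (n + 1), x i ^ (n + 1) = 0} := by
  have : Fact p.Prime := ⟨hp⟩
  obtain ⟨d, hd⟩ := hdvd
  have hcount := FiniteField.natCast_card_zeroes_sum_pow_card (K := ZMod p) (ι := Fin (n + 1))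
    (d := d) (by rw [ZMod.card, Fintype.card_fin, hd])
  rw [Fintype.card_fin] at hcount
  have hmultinomial : ¬ p ∣ Nat.multinomial univ (fun _ : Fin (n + 1) ↦ d) := by
    refine hp.not_dvd_multinomial ?_
    rw [sum_const, card_univ, Fintype.card_fin, smul_eq_mul, ← hd]
    exact Nat.sub_lt hp.pos one_pos
  intro hp_dvd
  rw [(ZMod.natCast_eq_zero_iff _ p).2 hp_dvd, eq_comm, neg_eq_zero, mul_eq_zero,
    ZMod.natCast_eq_zero_iff] at hcount
  exact hcount.elim hmultinomial (pow_ne_zero _ (neg_ne_zero.2 one_ne_zero))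
end
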